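/- Positivity of the quartic interaction Morawetz form: For all Schwartz functions u, v : ℝ → ℂ, ∫_ℝ [ M(u)(x)·E(v)(x) + M(v)(x)·E(u)(x) − 2·P(u)(x)·P(v)(x) ] dx = 4 ∫_ℝ |∂_x (u(x)·conj(v(x)))|² dx. In particular the left-hand side is nonnegative. -/

import Mathlib

noncomputable section
open ComplexConjugate MeasureTheory

/-- The mass density `M(u) = |u|²` of a function of `x` (as `u·conj u`). -/
def Md (u : ℝ → ℂ) (x : ℝ) : ℂ := u x * conj (u x)

/-- The momentum density `P(u) = i(conj u·∂ₓu − u·∂ₓ(conj u))`. -/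
def Pd (u : ℝ → ℂ) (x : ℝ) : ℂ :=
  Complex.I * (conj (u x) * deriv u x - u x * conj (deriv u x))

/-- The energy density `E(u) = −conj u·∂ₓ²u + 2|∂ₓu|² − u·∂ₓ²(conj u)`. -/
def Ed (u : ℝ → ℂ) (x : ℝ) : ℂ :=
  - conj (u x) * deriv (deriv u) x + 2 * deriv u x * conj (deriv u x)
    - u x * conj (deriv (deriv u) x)

/-!
Pointwise, `M(u)E(v) + M(v)E(u) − 2P(u)P(v) = 4|∂ₓ(u·conj v)|² − ∂ₓ²(M(u)M(v))`: this follows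
from `E(u) = 4|∂ₓu|² − ∂ₓ²M(u)` and the Leibniz rule, after which the remaining quartic terms
cancel because `P(u) = −2 Im(conj u·∂ₓu)` and `∂ₓM(u) = 2 Re(conj u·∂ₓu)`. For Schwartz `u`, `v`
the function `M(u)M(v)` is Schwartz, so its second derivative integrates to zero.
-/

open SchwartzMap

theorem HasDerivAt.mul_conj {f g : ℝ → ℂ} {f' g' : ℂ} {x : ℝ} (hf : HasDerivAt f f' x)
    (hg : HasDerivAt g g' x) :
    HasDerivAt (fun y => f y * conj (g y)) (f' * conj (g x) + f x * conj g') x :=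
  hf.mul hg.star

section Densities

variable {u v : ℝ → ℂ}

theorem hasDerivAt_Md {u' : ℂ} {x : ℝ} (hu : HasDerivAt u u' x) :
    HasDerivAt (Md u) (u' * conj (u x) + u x * conj u') x :=
  hu.mul_conj hu

theorem differentiable_Md (hu : Differentiable ℝ u) : Differentiable ℝ (Md u) :=
  fun x => (hasDerivAt_Md (hu x).hasDerivAt).differentiableAt

theorem deriv_Md (hu : Differentiable ℝ u) :
    deriv (Md u) = fun x => deriv u x * conj (u x) + u x * conj (deriv u x) :=
  funext fun x => (hasDerivAt_Md (hu x).hasDerivAt).deriv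

theorem hasDerivAt_deriv_Md (hu : Differentiable ℝ u) (hu' : Differentiable ℝ (deriv u))
    (x : ℝ) : HasDerivAt (deriv (Md u)) (4 * deriv u x * conj (deriv u x) - Ed u x) x := by
  rw [deriv_Md hu]
  refine (((hu' x).hasDerivAt.mul_conj (hu x).hasDerivAt).add
    ((hu x).hasDerivAt.mul_conj (hu' x).hasDerivAt)).congr_deriv ?_
  rw [Ed]
  ring

theorem deriv_deriv_Md_mul_Md (hu : Differentiable ℝ u) (hu' : Differentiable ℝ (deriv u))
    (hv : Differentiable ℝ v) (hv' : Differentiable ℝ (deriv v)) (x : ℝ) :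
    deriv (deriv fun y => Md u y * Md v y) x =
      (4 * deriv u x * conj (deriv u x) - Ed u x) * Md v x
        + 2 * deriv (Md u) x * deriv (Md v) x
        + Md u x * (4 * deriv v x * conj (deriv v x) - Ed v x) := by
  have hleibniz : deriv (fun y => Md u y * Md v y)
      = fun y => deriv (Md u) y * Md v y + Md u y * deriv (Md v) y :=
    funext fun y => deriv_mul (differentiable_Md hu y) (differentiable_Md hv y)
  rw [hleibniz]
  exact (((hasDerivAt_deriv_Md hu hu' x).mul (differentiable_Md hv x).hasDerivAt).add
    ((differentiable_Md hu x).hasDerivAt.mul (hasDerivAt_deriv_Md hv hv' x))).deriv.trans (by ring)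

theorem morawetz_density_eq (hu : Differentiable ℝ u) (hu' : Differentiable ℝ (deriv u))
    (hv : Differentiable ℝ v) (hv' : Differentiable ℝ (deriv v)) (x : ℝ) :
    Md u x * Ed v x + Md v x * Ed u x - 2 * Pd u x * Pd v x
      = 4 * (deriv (fun y => u y * conj (v y)) x * conj (deriv (fun y => u y * conj (v y)) x))
        - deriv (deriv fun y => Md u y * Md v y) x := by
  rw [deriv_deriv_Md_mul_Md hu hu' hv hv', ((hu x).hasDerivAt.mul_conj (hv x).hasDerivAt).deriv,
    deriv_Md hu, deriv_Md hv]
  simp only [Md, Pd, map_add, map_mul, Complex.conj_conj]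
  linear_combination (-2 * (conj (u x) * deriv u x - u x * conj (deriv u x))
    * (conj (v x) * deriv v x - v x * conj (deriv v x))) * Complex.I_sq

end Densities

theorem re_integral_mul_conj_nonneg {α : Type*} [MeasurableSpace α] (μ : Measure α)
    (f : α → ℂ) : 0 ≤ (∫ x, f x * conj (f x) ∂μ).re := by
  simp_rw [Complex.mul_conj]
  rw [integral_complex_ofReal, Complex.ofReal_re]
  exact integral_nonneg fun x => Complex.normSq_nonneg (f x)

namespace SchwartzMap

variable {E F : Type*} [NormedAddCommGroup E] [NormedSpace ℝ E]
  [NormedAddCommGroup F] [NormedSpace ℝ F]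

theorem integral_deriv_eq_zero (f : 𝓢(ℝ, F)) : ∫ x, deriv f x = 0 :=
  integral_eq_zero_of_hasDerivAt_of_integrable f.hasDerivAt (derivCLM ℝ F f).integrable
    f.integrable

def mulConj (f g : 𝓢(E, ℂ)) : 𝓢(E, ℂ) :=
  pairing ((ContinuousLinearMap.mul ℝ ℂ).bilinearComp (.id ℝ ℂ)
    Complex.conjCLE.toContinuousLinearMap) f g

end SchwartzMap

theorem integral_morawetz_density_eq (u v : 𝓢(ℝ, ℂ)) :
    ∫ x, (Md u x * Ed v x + Md v x * Ed u x - 2 * Pd u x * Pd v x)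
      = 4 * ∫ x, deriv (fun y => u y * conj (v y)) x
          * conj (deriv (fun y => u y * conj (v y)) x) := by
  let W := derivCLM ℝ ℂ (mulConj u v)
  let G := pairing (ContinuousLinearMap.mul ℝ ℂ) (mulConj u u) (mulConj v v)
  have hW : Integrable fun x => deriv (fun y => u y * conj (v y)) x
      * conj (deriv (fun y => u y * conj (v y)) x) := (mulConj W W).integrable
  have hG : Integrable (deriv (deriv fun y => Md u y * Md v y)) :=
    (derivCLM ℝ ℂ (derivCLM ℝ ℂ G)).integrable
  have hG0 : ∫ x, deriv (deriv fun y => Md u y * Md v y) x = 0 :=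
    (derivCLM ℝ ℂ G).integral_deriv_eq_zero
  simp_rw [morawetz_density_eq u.differentiable (derivCLM ℝ ℂ u).differentiable
    v.differentiable (derivCLM ℝ ℂ v).differentiable]
  rw [integral_sub (hW.const_mul 4) hG, integral_const_mul, hG0, sub_zero]

/-- Positivity of the quartic interaction Morawetz form: for Schwartz
functions `u`, `v`,
`∫ (M(u)E(v) + M(v)E(u) − 2P(u)P(v)) = 4∫ |∂ₓ(u·conj v)|²`; in particular the
left-hand side is nonnegative. -/
theorem interaction_morawetz_positivity (u v : SchwartzMap ℝ ℂ) :
    (∫ x : ℝ, (Md (⇑u) x * Ed (⇑v) x + Md (⇑v) x * Ed (⇑u) x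
        - 2 * Pd (⇑u) x * Pd (⇑v) x))
      = 4 * ∫ x : ℝ, (deriv (fun y => u y * conj (v y)) x
          * conj (deriv (fun y => u y * conj (v y)) x)) ∧
    0 ≤ (∫ x : ℝ, (Md (⇑u) x * Ed (⇑v) x + Md (⇑v) x * Ed (⇑u) x
        - 2 * Pd (⇑u) x * Pd (⇑v) x)).re := by
  refine ⟨integral_morawetz_density_eq u v, ?_⟩
  rw [integral_morawetz_density_eq]
  simp only [Complex.mul_re, Complex.re_ofNat, Complex.im_ofNat, zero_mul, sub_zero]
  exact mul_nonneg (by norm_num) (re_integral_mul_conj_nonneg _ _)
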